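/- arXiv:1808.10211 — 2 statements merged into one kernel-verified Lean document; each statement's English description precedes it below -/
import Mathlib

section
/- Let A : [0,∞) → [0,∞) be a nondecreasing, right-continuous, subadditive function with A(0) = 0 such that sup_{t>0} A(t)/t < ∞. Then lim_{α→∞} α² ∫₀^∞ e^{−αt} A(t) dt = sup_{t>0} A(t)/t. -/
/-!
Covering `s` by `⌈s/t⌉` copies of `t`, monotonicity and subadditivity give
`A s * t ≤ A t * (s + t)`, hence `A t / t → L := sup_{t>0} A t / t` as `t → 0⁺`.
The substitution `s = α t` turns `α² ∫ e^{-αt} A t dt` into `∫ e^{-s} s (A (s/α) / (s/α)) ds`,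
and dominated convergence, with dominating function `L s e^{-s}`, gives the limit
`L ∫ s e^{-s} ds = L Γ(2) = L`.
-/

open Filter MeasureTheory Set Real Topology

section Subadditive

variable {A : ℝ → ℝ}

theorem apply_nat_mul_le_of_subadditive (h0 : A 0 = 0)
    (hsub : ∀ s t, 0 ≤ s → 0 ≤ t → A (s + t) ≤ A s + A t) (n : ℕ) {t : ℝ} (ht : 0 ≤ t) :
    A (n * t) ≤ n * A t := by
  induction n with
  | zero => simp [h0]
  | succ n ih =>
    calc A ((n + 1 : ℕ) * t) = A (n * t + t) := by push_cast; ring_nf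
      _ ≤ A (n * t) + A t := hsub _ _ (by positivity) ht
      _ ≤ (n + 1 : ℕ) * A t := by push_cast; linarith

theorem apply_mul_le_apply_mul_add_of_subadditive (h0 : A 0 = 0)
    (hmono : ∀ s t, 0 ≤ s → s ≤ t → A s ≤ A t)
    (hsub : ∀ s t, 0 ≤ s → 0 ≤ t → A (s + t) ≤ A s + A t) {s t : ℝ} (hs : 0 < s) (ht : 0 < t) :
    A s * t ≤ A t * (s + t) := by
  set n := ⌈s / t⌉₊
  have hn_ge : s ≤ n * t := (div_le_iff₀ ht).1 (Nat.le_ceil _)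
  have hn_lt : n * t < s + t := by
    have := Nat.ceil_lt_add_one (div_nonneg hs.le ht.le)
    rwa [div_add_one ht.ne', lt_div_iff₀ ht] at this
  have hAt : 0 ≤ A t := h0 ▸ hmono 0 t le_rfl ht.le
  calc A s * t ≤ A (n * t) * t := by gcongr; exact hmono _ _ hs.le hn_ge
    _ ≤ n * A t * t := by gcongr; exact apply_nat_mul_le_of_subadditive h0 hsub n ht.le
    _ = A t * (n * t) := by ring
    _ ≤ A t * (s + t) := by gcongr

theorem tendsto_apply_div_self_nhdsGT_zero (h0 : A 0 = 0)
    (hmono : ∀ s t, 0 ≤ s → s ≤ t → A s ≤ A t)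
    (hsub : ∀ s t, 0 ≤ s → 0 ≤ t → A (s + t) ≤ A s + A t)
    (hbdd : BddAbove {r : ℝ | ∃ t, 0 < t ∧ r = A t / t}) :
    Tendsto (fun t => A t / t) (𝓝[>] 0) (𝓝 (sSup {r : ℝ | ∃ t, 0 < t ∧ r = A t / t})) := by
  have hne : {r : ℝ | ∃ t, 0 < t ∧ r = A t / t}.Nonempty := ⟨_, 1, one_pos, rfl⟩
  refine tendsto_order.2 ⟨fun a ha => ?_, fun a ha => ?_⟩
  · obtain ⟨_, ⟨s, hs, rfl⟩, has⟩ := exists_lt_of_lt_csSup hne ha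
    have hlim : Tendsto (fun t => A s / (s + t)) (𝓝[>] 0) (𝓝 (A s / s)) := by
      have : ContinuousAt (fun t => A s / (s + t)) 0 := by
        fun_prop (disch := simpa using hs.ne')
      simpa using this.tendsto.mono_left nhdsWithin_le_nhds
    filter_upwards [hlim.eventually (lt_mem_nhds has), self_mem_nhdsWithin] with t hat ht
    refine hat.trans_le ?_
    rw [div_le_div_iff₀ (by linarith [mem_Ioi.1 ht]) ht]
    exact apply_mul_le_apply_mul_add_of_subadditive h0 hmono hsub hs ht
  · filter_upwards [self_mem_nhdsWithin] with t ht
    exact (le_csSup hbdd ⟨t, ht, rfl⟩).trans_lt ha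

end Subadditive

theorem integral_exp_neg_mul_self_Ioi : ∫ x in Ioi 0, exp (-x) * x = 1 := by
  have := Real.Gamma_eq_integral (s := 2) two_pos
  norm_num at this
  simpa [Real.Gamma_two] using this.symm

theorem integrableOn_exp_neg_mul_self_Ioi : IntegrableOn (fun x => exp (-x) * x) (Ioi 0) := by
  have := Real.GammaIntegral_convergent (s := 2) two_pos
  norm_num at this
  exact this

theorem sq_mul_integral_exp_neg_mul_Ioi (f : ℝ → ℝ) {α : ℝ} (hα : 0 < α) :
    α ^ 2 * ∫ t in Ioi 0, exp (-(α * t)) * f t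
      = ∫ s in Ioi 0, exp (-s) * (α * f (α⁻¹ * s)) := by
  have hsubst := integral_comp_mul_left_Ioi' (fun s => exp (-s) * f (α⁻¹ * s)) 0 hα
  simp only [inv_mul_cancel_left₀ hα.ne', mul_zero, smul_eq_mul] at hsubst
  simp_rw [mul_left_comm (exp _) α, integral_const_mul, ← hsubst]
  ring

section Abelian

variable {f : ℝ → ℝ} {C L : ℝ}

theorem tendsto_mul_apply_inv_mul_atTop (hlim : Tendsto (fun t => f t / t) (𝓝[>] 0) (𝓝 L))
    {s : ℝ} (hs : 0 < s) : Tendsto (fun α => α * f (α⁻¹ * s)) atTop (𝓝 (s * L)) := by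
  have hscale : Tendsto (fun α : ℝ => α⁻¹ * s) atTop (𝓝[>] 0) := by
    refine tendsto_nhdsWithin_iff.2 ⟨?_, ?_⟩
    · simpa using tendsto_inv_atTop_zero.mul_const s
    · filter_upwards [eventually_gt_atTop 0] with α hα
      exact mul_pos (inv_pos.2 hα) hs
  refine ((hlim.comp hscale).const_mul s).congr' ?_
  filter_upwards [eventually_gt_atTop 0] with α hα
  simp only [Function.comp_apply]
  field_simp

theorem tendsto_sq_mul_integral_exp_neg_mul_Ioi
    (hmeas : AEStronglyMeasurable f (volume.restrict (Ioi 0)))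
    (hbound : ∀ t, 0 < t → |f t| ≤ C * t)
    (hlim : Tendsto (fun t => f t / t) (𝓝[>] 0) (𝓝 L)) :
    Tendsto (fun α => α ^ 2 * ∫ t in Ioi 0, exp (-(α * t)) * f t) atTop (𝓝 L) := by
  have hint : ∫ s in Ioi 0, exp (-s) * (s * L) = L := by
    simp only [← mul_assoc, integral_mul_const, integral_exp_neg_mul_self_Ioi, one_mul]
  rw [← hint]
  refine Tendsto.congr' ?_ (tendsto_integral_filter_of_dominated_convergence
    (F := fun α s => exp (-s) * (α * f (α⁻¹ * s))) (fun s => C * (exp (-s) * s))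
    ?_ ?_ (integrableOn_exp_neg_mul_self_Ioi.const_mul C) ?_)
  · filter_upwards [eventually_gt_atTop 0] with α hα
    exact (sq_mul_integral_exp_neg_mul_Ioi f hα).symm
  · filter_upwards [eventually_gt_atTop 0] with α hα
    have hcomp : AEStronglyMeasurable (fun s => f (α⁻¹ * s)) (volume.restrict (Ioi 0)) :=
      hmeas.comp_quasiMeasurePreserving
        ((Measure.quasiMeasurePreserving_smul volume (inv_ne_zero hα.ne')).restrict
          fun s hs => mul_pos (inv_pos.2 hα) hs)
    exact continuous_neg.rexp.aestronglyMeasurable.mul (hcomp.const_mul α)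
  · filter_upwards [eventually_gt_atTop 0] with α hα
    filter_upwards [ae_restrict_mem measurableSet_Ioi] with s hs
    have := hbound _ (mul_pos (inv_pos.2 hα) hs)
    rw [norm_mul, norm_mul, Real.norm_eq_abs, Real.norm_eq_abs, Real.norm_eq_abs, abs_of_pos hα,
      abs_of_pos (exp_pos _)]
    calc exp (-s) * (α * |f (α⁻¹ * s)|) ≤ exp (-s) * (α * (C * (α⁻¹ * s))) := by gcongr
      _ = C * (exp (-s) * s) := by field_simp
  · filter_upwards [ae_restrict_mem measurableSet_Ioi] with s hs
    exact (tendsto_mul_apply_inv_mul_atTop hlim hs).const_mul _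

end Abelian

theorem stmt_2_general (A : ℝ → ℝ) (h0 : A 0 = 0)
    (hmono : ∀ s t, 0 ≤ s → s ≤ t → A s ≤ A t)
    (hsub : ∀ s t, 0 ≤ s → 0 ≤ t → A (s + t) ≤ A s + A t)
    (hbdd : BddAbove {r : ℝ | ∃ t, 0 < t ∧ r = A t / t}) :
    Tendsto (fun α : ℝ => α ^ 2 * ∫ t in Ioi (0 : ℝ), Real.exp (-(α * t)) * A t) atTop
      (nhds (sSup {r : ℝ | ∃ t, 0 < t ∧ r = A t / t})) := by
  refine tendsto_sq_mul_integral_exp_neg_mul_Ioi (C := sSup {r : ℝ | ∃ t, 0 < t ∧ r = A t / t})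
    ?_ (fun t ht => ?_) (tendsto_apply_div_self_nhdsGT_zero h0 hmono hsub hbdd)
  · exact (aemeasurable_restrict_of_monotoneOn measurableSet_Ioi
      fun s hs t _ hst => hmono s t hs.le hst).aestronglyMeasurable
  · rw [abs_of_nonneg (h0 ▸ hmono 0 t le_rfl ht.le), ← div_le_iff₀ ht]
    exact le_csSup hbdd ⟨t, ht, rfl⟩

/-- For a nondecreasing, right-continuous, subadditive `A : [0,∞) → [0,∞)` with `A 0 = 0`
and `sup_{t>0} A t / t < ∞`, the Abelian limit
`lim_{α→∞} α² ∫₀^∞ e^{−αt} A t dt = sup_{t>0} A t / t` holds. -/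
theorem stmt_2 (A : ℝ → ℝ) (h0 : A 0 = 0)
    (hmono : ∀ s t, 0 ≤ s → s ≤ t → A s ≤ A t)
    (hrc : ∀ t, 0 ≤ t → ContinuousWithinAt A (Ici t) t)
    (hsub : ∀ s t, 0 ≤ s → 0 ≤ t → A (s + t) ≤ A s + A t)
    (hbdd : BddAbove {r : ℝ | ∃ t, 0 < t ∧ r = A t / t}) :
    Tendsto (fun α : ℝ => α ^ 2 * ∫ t in Ioi (0 : ℝ), Real.exp (-(α * t)) * A t) atTop
      (nhds (sSup {r : ℝ | ∃ t, 0 < t ∧ r = A t / t})) :=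
  stmt_2_general A h0 hmono hsub hbdd
end

section
/- Let A : [0,∞) → [0,∞) be nondecreasing, right-continuous, subadditive with A(0) = 0, and let α ↦ ∫₀^∞ e^{−αt} dA(t) denote the Laplace–Stieltjes transform of A. If sup_{t>0} A(t)/t < ∞ then lim_{α→∞} α ∫₀^∞ e^{−αt} dA(t) = sup_{t>0} A(t)/t. -/
open Filter MeasureTheory Set Topology
open scoped ENNReal

/-!
Subadditivity forces `A t / t` to converge to `L = sup_{t>0} A t / t` as `t → 0⁺`: if
`t = n v + r` with `0 ≤ r < v`, then `A t ≤ n A v + L r`, so `A v / v ≥ A t / t - L v / t`.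
Writing `e^{-αt} = ∫_t^∞ α e^{-αs} ds` and exchanging the integrals (Tonelli) gives
`α ∫ e^{-αt} dA(t) = α² ∫ e^{-αs} A s ds = ∫ e^{-u} u · (A (u/α) / (u/α)) du`,
and since `0 ≤ A v / v ≤ L`, dominated convergence yields the limit `L · Γ(2) = L`.
-/

def originSlopes (f : ℝ → ℝ) : Set ℝ := {r | ∃ t, 0 < t ∧ r = f t / t}

section Subadditive

variable {f : ℝ → ℝ}

theorem le_nat_mul_add_of_subadditive
    (hsub : ∀ s t, 0 ≤ s → 0 ≤ t → f (s + t) ≤ f s + f t) (n : ℕ) {v r : ℝ} (hv : 0 ≤ v)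
    (hr : 0 ≤ r) : f (n * v + r) ≤ n * f v + f r := by
  induction n with
  | zero => simp
  | succ n ih =>
    have hsplit : ((n + 1 : ℕ) : ℝ) * v + r = v + (n * v + r) := by push_cast; ring
    rw [hsplit]
    push_cast
    linarith [hsub v (n * v + r) hv (by positivity)]

theorem le_sSup_originSlopes_mul (h0 : f 0 = 0) (hbdd : BddAbove (originSlopes f)) {t : ℝ}
    (ht : 0 ≤ t) : f t ≤ sSup (originSlopes f) * t := by
  rcases ht.eq_or_lt with rfl | ht
  · simp [h0]
  · exact (div_le_iff₀ ht).1 (le_csSup hbdd ⟨t, ht, rfl⟩)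

theorem div_sub_le_div_of_subadditive (h0 : f 0 = 0) (hnonneg : ∀ t, 0 < t → 0 ≤ f t)
    (hsub : ∀ s t, 0 ≤ s → 0 ≤ t → f (s + t) ≤ f s + f t) (hbdd : BddAbove (originSlopes f))
    {t v : ℝ} (hv : 0 < v) (hvt : v ≤ t) :
    f t / t - sSup (originSlopes f) * v / t ≤ f v / v := by
  set L := sSup (originSlopes f)
  have hL : 0 ≤ L :=
    (div_nonneg (hnonneg 1 one_pos) zero_le_one).trans (le_csSup hbdd ⟨1, one_pos, rfl⟩)
  set n := ⌊t / v⌋₊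
  have hnv : n * v ≤ t :=
    (le_div_iff₀ hv).1 (Nat.floor_le (div_nonneg (hv.le.trans hvt) hv.le))
  have hvn : t < n * v + v := by
    have := Nat.lt_floor_add_one (t / v)
    rw [div_lt_iff₀ hv] at this
    linarith
  have hft : f t ≤ t * (f v / v) + L * v := calc
    f t = f (n * v + (t - n * v)) := by ring_nf
    _ ≤ n * f v + f (t - n * v) := le_nat_mul_add_of_subadditive hsub n hv.le (by linarith)
    _ ≤ n * v * (f v / v) + L * (t - n * v) := by
        rw [mul_assoc, mul_div_cancel₀ _ hv.ne']
        gcongr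
        exact le_sSup_originSlopes_mul h0 hbdd (by linarith)
    _ ≤ t * (f v / v) + L * v := by
        gcongr
        · exact div_nonneg (hnonneg v hv) hv.le
        · linarith
  rw [← sub_div, div_le_iff₀ (hv.trans_le hvt)]
  linarith

theorem tendsto_div_nhdsGT_zero_sSup_originSlopes (h0 : f 0 = 0)
    (hnonneg : ∀ t, 0 < t → 0 ≤ f t) (hsub : ∀ s t, 0 ≤ s → 0 ≤ t → f (s + t) ≤ f s + f t)
    (hbdd : BddAbove (originSlopes f)) :
    Tendsto (fun t => f t / t) (𝓝[>] 0) (𝓝 (sSup (originSlopes f))) := by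
  set L := sSup (originSlopes f)
  refine tendsto_order.2 ⟨fun a ha => ?_, fun b hb => ?_⟩
  · obtain ⟨_, ⟨t, ht, rfl⟩, hat⟩ :=
      exists_lt_of_lt_csSup (s := originSlopes f) ⟨_, 1, one_pos, rfl⟩ ha
    have hlower : Tendsto (fun v => f t / t - L * v / t) (𝓝[>] 0) (𝓝 (f t / t)) := by
      have : Continuous fun v => f t / t - L * v / t := by fun_prop
      simpa using (this.tendsto 0).mono_left nhdsWithin_le_nhds
    filter_upwards [hlower.eventually (lt_mem_nhds hat), Ioo_mem_nhdsGT ht] with v hv hvt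
    exact hv.trans_le (div_sub_le_div_of_subadditive h0 hnonneg hsub hbdd hvt.1 hvt.2.le)
  · filter_upwards [self_mem_nhdsWithin] with v hv
    exact (le_csSup hbdd ⟨v, hv, rfl⟩).trans_lt hb

end Subadditive

theorem Real.lintegral_Ici_mul_exp_neg_mul (t : ℝ) {α : ℝ} (hα : 0 < α) :
    ∫⁻ s in Ici t, ENNReal.ofReal (α * Real.exp (-(α * s))) =
      ENNReal.ofReal (Real.exp (-(α * t))) := by
  have hint : IntegrableOn (fun s => α * Real.exp (-(α * s))) (Ici t) := by
    rw [integrableOn_Ici_iff_integrableOn_Ioi]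
    simpa only [neg_mul, IntegrableOn] using (exp_neg_integrableOn_Ioi t hα).const_mul α
  rw [← ofReal_integral_eq_lintegral_ofReal hint (ae_of_all _ fun s => by positivity),
    integral_Ici_eq_integral_Ioi, integral_const_mul]
  simp_rw [← neg_mul]
  rw [integral_exp_mul_Ioi (neg_lt_zero.2 hα)]
  congr 1
  field_simp

namespace StieltjesFunction

theorem lintegral_Ioi_lintegral_Ici (f : StieltjesFunction ℝ) (a : ℝ) {ψ : ℝ → ℝ≥0∞}
    (hψ : Measurable ψ) :
    ∫⁻ t in Ioi a, (∫⁻ s in Ici t, ψ s) ∂f.measure =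
      ∫⁻ s in Ioi a, ψ s * ENNReal.ofReal (f s - f a) := by
  have hmeas : Measurable (Function.uncurry fun t s : ℝ => (Ici t).indicator ψ s) := by
    have : (Function.uncurry fun t s : ℝ => (Ici t).indicator ψ s) =
        {p : ℝ × ℝ | p.1 ≤ p.2}.indicator (fun p => ψ p.2) := by
      ext p; simp [Set.indicator, Function.uncurry]
    rw [this]
    exact (hψ.comp measurable_snd).indicator (measurableSet_le measurable_fst measurable_snd)
  have hsupp : (fun s => ψ s * ENNReal.ofReal (f s - f a)).support ⊆ Ioi a := by
    intro s hs
    by_contra h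
    simp [ENNReal.ofReal_eq_zero.2 (sub_nonpos.2 (f.mono (not_lt.1 h)))] at hs
  calc ∫⁻ t in Ioi a, (∫⁻ s in Ici t, ψ s) ∂f.measure
      = ∫⁻ t in Ioi a, (∫⁻ s, (Ici t).indicator ψ s) ∂f.measure := by
        simp_rw [lintegral_indicator measurableSet_Ici]
    _ = ∫⁻ s, ∫⁻ t in Ioi a, (Ici t).indicator ψ s ∂f.measure :=
        lintegral_lintegral_swap hmeas.aemeasurable
    _ = ∫⁻ s, ψ s * ENNReal.ofReal (f s - f a) := by
        refine lintegral_congr fun s => ?_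
        have : (fun t => (Ici t).indicator ψ s) = (Iic s).indicator fun _ => ψ s := by
          ext t; simp [Set.indicator]
        rw [this, lintegral_indicator measurableSet_Iic, setLIntegral_const,
          Measure.restrict_apply measurableSet_Iic, inter_comm, Ioi_inter_Iic, f.measure_Ioc]
    _ = ∫⁻ s in Ioi a, ψ s * ENNReal.ofReal (f s - f a) :=
        (setLIntegral_eq_of_support_subset hsupp).symm

/-- Both sides are `toReal` of the same lintegral, so the identity holds with no integrability
assumption (when that lintegral is infinite both Bochner integrals are `0`). -/
theorem integral_exp_neg_mul_Ioi (f : StieltjesFunction ℝ) (a : ℝ) {α : ℝ} (hα : 0 < α) :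
    ∫ t in Ioi a, Real.exp (-(α * t)) ∂f.measure =
      ∫ s in Ioi a, α * Real.exp (-(α * s)) * (f s - f a) := by
  have hmeas : Measurable fun s => α * Real.exp (-(α * s)) * (f s - f a) := by
    have := f.mono.measurable
    fun_prop
  rw [integral_eq_lintegral_of_nonneg_ae (ae_of_all _ fun t => (Real.exp_pos _).le)
      (by fun_prop : Continuous fun t => Real.exp (-(α * t))).aestronglyMeasurable,
    integral_eq_lintegral_of_nonneg_ae ?_ hmeas.aestronglyMeasurable]
  · simp_rw [← Real.lintegral_Ici_mul_exp_neg_mul _ hα]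
    rw [f.lintegral_Ioi_lintegral_Ici a (by fun_prop)]
    refine congrArg ENNReal.toReal
      (setLIntegral_congr_fun isOpen_Ioi.measurableSet fun s _ => ?_)
    exact (ENNReal.ofReal_mul (by positivity)).symm
  · filter_upwards [ae_restrict_mem isOpen_Ioi.measurableSet] with s hs
    exact mul_nonneg (by positivity) (sub_nonneg.2 (f.mono hs.le))

end StieltjesFunction

theorem mul_integral_Ioi_mul_exp_neg_mul_eq (g : ℝ → ℝ) {α : ℝ} (hα : 0 < α) :
    α * ∫ s in Ioi 0, α * Real.exp (-(α * s)) * g s =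
      ∫ u in Ioi 0, Real.exp (-u) * u * (g (u / α) / (u / α)) := by
  have h :=
    integral_comp_mul_left_Ioi (fun u => Real.exp (-u) * u * (g (u / α) / (u / α))) 0 hα
  rw [mul_zero, smul_eq_mul, eq_inv_mul_iff_mul_eq₀ hα.ne'] at h
  rw [← h]
  congr 1
  refine setIntegral_congr_fun measurableSet_Ioi fun s hs => ?_
  have hs0 : s ≠ 0 := (mem_Ioi.1 hs).ne'
  simp only [mul_div_cancel_left₀ _ hα.ne']
  field_simp

theorem tendsto_integral_Ioi_mul_comp_div_atTop {w h : ℝ → ℝ} {C L : ℝ}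
    (hw : IntegrableOn w (Ioi 0)) (hh : Measurable h) (hbound : ∀ v, 0 < v → ‖h v‖ ≤ C)
    (hlim : Tendsto h (𝓝[>] 0) (𝓝 L)) :
    Tendsto (fun α => ∫ u in Ioi 0, w u * h (u / α)) atTop (𝓝 ((∫ u in Ioi 0, w u) * L)) := by
  rw [← integral_mul_const]
  refine tendsto_integral_filter_of_dominated_convergence (fun u => ‖w u‖ * C)
    (Eventually.of_forall fun α =>
      hw.aestronglyMeasurable.mul (hh.comp (measurable_div_const α)).aestronglyMeasurable) ?_
    (hw.norm.mul_const C) ?_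
  · filter_upwards [eventually_gt_atTop 0] with α hα
    filter_upwards [ae_restrict_mem measurableSet_Ioi] with u hu
    rw [norm_mul]
    exact mul_le_mul_of_nonneg_left (hbound _ (div_pos hu hα)) (norm_nonneg _)
  · filter_upwards [ae_restrict_mem measurableSet_Ioi] with u hu
    have hdiv : Tendsto (fun α : ℝ => u / α) atTop (𝓝[>] 0) :=
      tendsto_nhdsWithin_of_tendsto_nhds_of_eventually_within _
        (tendsto_const_nhds.div_atTop tendsto_id)
        ((eventually_gt_atTop 0).mono fun α hα => div_pos hu hα)
    exact (hlim.comp hdiv).const_mul (w u)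

theorem stmt_3_general (A : StieltjesFunction ℝ) (h0 : A 0 = 0)
    (hsub : ∀ s t, 0 ≤ s → 0 ≤ t → A (s + t) ≤ A s + A t)
    (hbdd : BddAbove {r : ℝ | ∃ t, 0 < t ∧ r = A t / t}) :
    Tendsto (fun α : ℝ => α * ∫ t in Ioi (0 : ℝ), Real.exp (-(α * t)) ∂A.measure) atTop
      (nhds (sSup {r : ℝ | ∃ t, 0 < t ∧ r = A t / t})) := by
  change BddAbove (originSlopes A) at hbdd
  change Tendsto _ atTop (𝓝 (sSup (originSlopes A)))
  have hnonneg : ∀ t, 0 < t → 0 ≤ A t := fun t ht => h0 ▸ A.mono ht.le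
  have hslope := tendsto_div_nhdsGT_zero_sSup_originSlopes h0 hnonneg hsub hbdd
  have hbound : ∀ v, 0 < v → ‖A v / v‖ ≤ sSup (originSlopes A) := fun v hv => by
    rw [Real.norm_of_nonneg (div_nonneg (hnonneg v hv) hv.le)]
    exact le_csSup hbdd ⟨v, hv, rfl⟩
  have hgamma : IntegrableOn (fun u => Real.exp (-u) * u) (Ioi 0) ∧
      ∫ u in Ioi 0, Real.exp (-u) * u = 1 := by
    have hint := Real.GammaIntegral_convergent two_pos
    have hval := Real.Gamma_eq_integral two_pos
    norm_num at hint hval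
    exact ⟨hint, hval.symm⟩
  have hlim := tendsto_integral_Ioi_mul_comp_div_atTop hgamma.1
    (A.mono.measurable.div measurable_id) hbound hslope
  rw [hgamma.2, one_mul] at hlim
  refine hlim.congr' ?_
  filter_upwards [eventually_gt_atTop 0] with α hα
  rw [A.integral_exp_neg_mul_Ioi 0 hα, h0]
  simp_rw [sub_zero]
  exact (mul_integral_Ioi_mul_exp_neg_mul_eq A hα).symm

/-- Laplace–Stieltjes version: for a nondecreasing right-continuous `A` (a Stieltjes
function) vanishing on `(−∞,0]`, subadditive on `[0,∞)`, with `sup_{t>0} A t / t < ∞`,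
one has `lim_{α→∞} α ∫₀^∞ e^{−αt} dA(t) = sup_{t>0} A t / t`. -/
theorem stmt_3 (A : StieltjesFunction ℝ) (h0 : A 0 = 0)
    (hneg : ∀ t : ℝ, t ≤ 0 → A t = 0)
    (hsub : ∀ s t, 0 ≤ s → 0 ≤ t → A (s + t) ≤ A s + A t)
    (hbdd : BddAbove {r : ℝ | ∃ t, 0 < t ∧ r = A t / t}) :
    Tendsto (fun α : ℝ => α * ∫ t in Ioi (0 : ℝ), Real.exp (-(α * t)) ∂A.measure) atTop
      (nhds (sSup {r : ℝ | ∃ t, 0 < t ∧ r = A t / t})) :=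
  stmt_3_general A h0 hsub hbdd
end
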